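/- arXiv:math/0604466 — 4 statements merged into one kernel-verified Lean document; each statement's English description precedes it below -/
import Mathlib

section
/- Let K be a linearly ordered field and fp : K_fin → ℝ the finite-part map. Then fp is multiplicative: fp(x * y) = fp(x) * fp(y) for all finite x, y in K. -/
/-!
On finite elements `fp` coincides with Mathlib's `ArchimedeanClass.stdPart`: both are the real
number determined by the cut that `x` makes in `ℚ`, by monotonicity of `stdPart` and
`stdPart q = q`. The standard part is multiplicative, being the residue map onto the
archimedean field "finite elements modulo infinitesimals" followed by its embedding into `ℝ`.
-/

noncomputable def fp {K : Type*} [Field K] [LinearOrder K] [IsStrictOrderedRing K] (x : K) : ℝ :=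
  sSup {r : ℝ | ∃ q : ℚ, (q : K) ≤ x ∧ (q : ℝ) = r}

open ArchimedeanClass

namespace ArchimedeanClass

theorem mk_nonneg_of_abs_le_natCast {R : Type*} [CommRing R] [LinearOrder R] [IsStrictOrderedRing R]
    {x : R} {n : ℕ} (h : |x| ≤ n) : 0 ≤ mk x :=
  (min_le_mk_of_le_of_le (abs_le.mp h).1 (abs_le.mp h).2).trans' (by simp [mk_natCast_nonneg])

variable {K : Type*} [Field K] [LinearOrder K] [IsOrderedRing K] {x : K}

theorem ratCast_le_stdPart_of_le (hx : 0 ≤ mk x) {q : ℚ} (h : (q : K) ≤ x) :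
    (q : ℝ) ≤ stdPart x := by
  simpa only [stdPart_ratCast] using stdPart_monotoneOn (mk_ratCast_nonneg q) hx h

theorem ratCast_lt_of_lt_stdPart (hx : 0 ≤ mk x) {q : ℚ} (h : (q : ℝ) < stdPart x) :
    (q : K) < x := by
  refine lt_of_not_ge fun hxq ↦ h.not_ge ?_
  simpa only [stdPart_ratCast] using stdPart_monotoneOn hx (mk_ratCast_nonneg q) hxq

end ArchimedeanClass

theorem fp_eq_stdPart {K : Type*} [Field K] [LinearOrder K] [IsStrictOrderedRing K] {x : K}
    (hx : 0 ≤ mk x) : fp x = stdPart x := by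
  obtain ⟨q, hq⟩ := exists_rat_lt (stdPart x)
  refine csSup_eq_of_forall_le_of_forall_lt_exists_gt
    ⟨q, q, (ratCast_lt_of_lt_stdPart hx hq).le, rfl⟩ ?_ fun c hc ↦ ?_
  · rintro _ ⟨q, hq, rfl⟩
    exact ratCast_le_stdPart_of_le hx hq
  · obtain ⟨q, hcq, hq⟩ := exists_rat_btwn hc
    exact ⟨q, ⟨q, (ratCast_lt_of_lt_stdPart hx hq).le, rfl⟩, hcq⟩

theorem fp_multiplicative (K : Type*) [Field K] [LinearOrder K] [IsStrictOrderedRing K] (x y : K)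
    (hx : ∃ n : ℕ, -(n : K) ≤ x ∧ x ≤ (n : K))
    (hy : ∃ n : ℕ, -(n : K) ≤ y ∧ y ≤ (n : K)) :
    fp (x * y) = fp x * fp y := by
  obtain ⟨m, hxm⟩ := hx
  obtain ⟨n, hyn⟩ := hy
  have hx : 0 ≤ mk x := mk_nonneg_of_abs_le_natCast (abs_le.mpr hxm)
  have hy : 0 ≤ mk y := mk_nonneg_of_abs_le_natCast (abs_le.mpr hyn)
  have hxy : 0 ≤ mk (x * y) := by rw [mk_mul]; exact add_nonneg hx hy
  rw [fp_eq_stdPart hx, fp_eq_stdPart hy, fp_eq_stdPart hxy, stdPart_mul hx hy]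
end

section
/- Let K be a countable non-archimedean linearly ordered field. Then there exists a strictly decreasing sequence (c_k) of positive elements of K that tends to zero in the order sense: for every positive ε ∈ K there exists N such that c_k < ε for all k ≥ N. -/
/-!
Enumerate the positive elements as `x 0, x 1, …` and set `c 0 = x 0`,
`c (k + 1) = min (c k) (x (k + 1)) / 2`. Then `c` is positive, strictly decreasing and
`c k ≤ x k`, so every positive `ε = x n` eventually bounds `c` from above.
-/

section

variable {K : Type*} [Semifield K] [LinearOrder K] [IsStrictOrderedRing K]

def halfMinSeq (x : ℕ → K) : ℕ → K
  | 0 => x 0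
  | k + 1 => min (halfMinSeq x k) (x (k + 1)) / 2

theorem halfMinSeq_pos {x : ℕ → K} (hx : ∀ k, 0 < x k) (k : ℕ) : 0 < halfMinSeq x k := by
  induction k with
  | zero => exact hx 0
  | succ k ih => exact half_pos (lt_min ih (hx _))

theorem halfMinSeq_le {x : ℕ → K} (hx : ∀ k, 0 < x k) (k : ℕ) : halfMinSeq x k ≤ x k := by
  cases k with
  | zero => exact le_rfl
  | succ k =>
    have hmin : 0 < min (halfMinSeq x k) (x (k + 1)) := lt_min (halfMinSeq_pos hx k) (hx _)
    exact (half_le_self hmin.le).trans (min_le_right _ _)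

theorem strictAnti_halfMinSeq {x : ℕ → K} (hx : ∀ k, 0 < x k) : StrictAnti (halfMinSeq x) := by
  refine strictAnti_nat_of_succ_lt fun k => ?_
  have hmin : 0 < min (halfMinSeq x k) (x (k + 1)) := lt_min (halfMinSeq_pos hx k) (hx _)
  exact (half_lt_self hmin).trans_le (min_le_left _ _)

end

theorem exists_null_sequence_general (K : Type*) [Field K] [LinearOrder K] [IsStrictOrderedRing K] [Countable K] :
    ∃ c : ℕ → K, StrictAnti c ∧ (∀ k, 0 < c k) ∧
      ∀ ε : K, 0 < ε → ∃ N : ℕ, ∀ k ≥ N, c k < ε := by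
  have : Nonempty {ε : K // 0 < ε} := ⟨⟨1, one_pos⟩⟩
  obtain ⟨x, hx⟩ := exists_surjective_nat {ε : K // 0 < ε}
  have hpos : ∀ k, 0 < (x k : K) := fun k => (x k).2
  refine ⟨halfMinSeq (fun k => x k), strictAnti_halfMinSeq hpos, halfMinSeq_pos hpos, ?_⟩
  intro ε hε
  obtain ⟨n, hn⟩ := hx ⟨ε, hε⟩
  refine ⟨n + 1, fun k hk => ?_⟩
  calc halfMinSeq (fun k => (x k : K)) k < halfMinSeq (fun k => (x k : K)) n :=
        strictAnti_halfMinSeq hpos (by omega)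
    _ ≤ x n := halfMinSeq_le hpos n
    _ = ε := by rw [hn]

theorem exists_null_sequence (K : Type*) [Field K] [LinearOrder K] [IsStrictOrderedRing K] [Countable K]
    (hna : ∃ e : K, ∀ n : ℕ, (n : K) < e) :
    ∃ c : ℕ → K, StrictAnti c ∧ (∀ k, 0 < c k) ∧
      ∀ ε : K, 0 < ε → ∃ N : ℕ, ∀ k ≥ N, c k < ε :=
  exists_null_sequence_general K
end

section
/- Let K be a linearly ordered field satisfying the intermediate value property for polynomials: whenever f ∈ K[X] and a < b with f(a) * f(b) < 0, there exists x ∈ [a,b] with f(x) = 0. Then every positive element of K has a square root in K, and every polynomial of odd degree over K has a root in K; hence K is real closed. -/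
/-!
A positive `c` has a square root because `X ^ 2 - C c` changes sign on `[0, c + 1]`. A polynomial
of positive degree and positive leading coefficient tends to `+∞` at `+∞`, by induction on the
degree through `f = divX f * X + C (f.coeff 0)`; substituting `-X`, one of odd degree tends to `-∞`
at `-∞`, so it changes sign as well.
-/

open Filter Polynomial

namespace Polynomial

theorem leadingCoeff_divX {R : Type*} [Semiring R] {f : R[X]} (hf : 0 < f.natDegree) :
    f.divX.leadingCoeff = f.leadingCoeff := by
  rw [leadingCoeff, natDegree_divX_eq_natDegree_tsub_one, coeff_divX, Nat.sub_add_cancel hf]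
  rfl

variable {K : Type*} [Field K] [LinearOrder K] [IsStrictOrderedRing K]

theorem tendsto_eval_atTop {f : K[X]} (hf : 0 < f.natDegree) (hlc : 0 < f.leadingCoeff) :
    Tendsto f.eval atTop atTop := by
  have heval : f.eval = fun x => f.divX.eval x * x + f.coeff 0 := by
    funext x
    conv_lhs => rw [← divX_mul_X_add f]
    simp
  have hlc' : 0 < f.divX.leadingCoeff := leadingCoeff_divX hf ▸ hlc
  rw [heval]
  refine tendsto_atTop_add_const_right _ _ ?_
  rcases Nat.eq_zero_or_pos f.divX.natDegree with h0 | hpos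
  · rw [eq_C_of_natDegree_eq_zero h0]
    simpa [leadingCoeff, h0] using tendsto_id.const_mul_atTop hlc'
  · exact (tendsto_eval_atTop hpos hlc').atTop_mul_atTop₀ tendsto_id
termination_by f.natDegree
decreasing_by rw [natDegree_divX_eq_natDegree_tsub_one]; omega

theorem tendsto_eval_atBot_of_odd {f : K[X]} (hf : Odd f.natDegree) (hlc : 0 < f.leadingCoeff) :
    Tendsto f.eval atBot atBot := by
  set g := -f.comp (-X)
  have hg : g.natDegree = f.natDegree := by simp [g, natDegree_comp]
  have hlc' : 0 < g.leadingCoeff := by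
    simpa [g, leadingCoeff_comp, hf.neg_one_pow] using hlc
  have := (tendsto_eval_atTop (hg ▸ hf.pos) hlc').comp tendsto_neg_atBot_atTop
  simpa [g, Function.comp_def] using tendsto_neg_atTop_atBot.comp this

end Polynomial

def HasPolynomialIVP (K : Type*) [Field K] [LinearOrder K] : Prop :=
  ∀ f : K[X], ∀ a b : K, a < b → f.eval a * f.eval b < 0 →
    ∃ x : K, a ≤ x ∧ x ≤ b ∧ f.eval x = 0

namespace HasPolynomialIVP

variable {K : Type*} [Field K] [LinearOrder K] [IsStrictOrderedRing K]

theorem exists_mem_Icc_eval_eq_zero (hK : HasPolynomialIVP K) {f : K[X]} {a b : K} (hab : a < b)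
    (ha : f.eval a < 0) (hb : 0 < f.eval b) : ∃ x ∈ Set.Icc a b, f.eval x = 0 := by
  obtain ⟨x, hax, hxb, hx⟩ := hK f a b hab (mul_neg_of_neg_of_pos ha hb)
  exact ⟨x, ⟨hax, hxb⟩, hx⟩

theorem exists_pos_sq_eq (hK : HasPolynomialIVP K) {c : K} (hc : 0 < c) :
    ∃ s : K, 0 < s ∧ s ^ 2 = c := by
  obtain ⟨s, ⟨hs, -⟩, hsc⟩ :=
    hK.exists_mem_Icc_eval_eq_zero (f := X ^ 2 - C c) (a := 0) (b := c + 1) (by linarith)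
      (by simpa using hc) (by simp only [eval_sub, eval_pow, eval_X, eval_C]; nlinarith)
  rw [eval_sub, eval_pow, eval_X, eval_C, sub_eq_zero] at hsc
  refine ⟨s, hs.lt_of_ne ?_, hsc⟩
  rintro rfl
  simp [hc.ne] at hsc

theorem exists_eval_eq_zero_of_odd_of_leadingCoeff_pos (hK : HasPolynomialIVP K) {f : K[X]}
    (hf : Odd f.natDegree) (hlc : 0 < f.leadingCoeff) : ∃ x : K, f.eval x = 0 := by
  obtain ⟨b, hb⟩ := ((tendsto_eval_atTop hf.pos hlc).eventually_gt_atTop 0).exists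
  obtain ⟨a, ha, hab⟩ :=
    (((tendsto_eval_atBot_of_odd hf hlc).eventually_lt_atBot 0).and (eventually_lt_atBot b)).exists
  obtain ⟨x, -, hx⟩ := hK.exists_mem_Icc_eval_eq_zero hab ha hb
  exact ⟨x, hx⟩

theorem exists_eval_eq_zero_of_odd (hK : HasPolynomialIVP K) {f : K[X]} (hf : Odd f.natDegree) :
    ∃ x : K, f.eval x = 0 := by
  have hlc : f.leadingCoeff ≠ 0 := leadingCoeff_ne_zero.2 (ne_zero_of_natDegree_gt hf.pos)
  rcases hlc.lt_or_gt with hneg | hpos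
  · obtain ⟨x, hx⟩ := hK.exists_eval_eq_zero_of_odd_of_leadingCoeff_pos (f := -f)
      (by rwa [natDegree_neg]) (by rwa [leadingCoeff_neg, neg_pos])
    exact ⟨x, by simpa using hx⟩
  · exact hK.exists_eval_eq_zero_of_odd_of_leadingCoeff_pos hf hpos

end HasPolynomialIVP

theorem real_closed_of_ivp (K : Type*) [Field K] [LinearOrder K] [IsStrictOrderedRing K]
    (hivp : ∀ f : Polynomial K, ∀ a b : K, a < b → f.eval a * f.eval b < 0 →
      ∃ x : K, a ≤ x ∧ x ≤ b ∧ f.eval x = 0) :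
    (∀ c : K, 0 < c → ∃ s : K, 0 < s ∧ s ^ 2 = c) ∧
    (∀ f : Polynomial K, Odd f.natDegree → ∃ x : K, f.eval x = 0) :=
  have hK : HasPolynomialIVP K := hivp
  ⟨fun _ => hK.exists_pos_sq_eq, fun _ => hK.exists_eval_eq_zero_of_odd⟩
end

section
/- Let K be a real closed ordered field. Then the subfield of K consisting of elements algebraic over ℚ is itself a real closed field. -/
/-! The square root of an algebraic number is algebraic, and so is a root of a polynomial whose
coefficients are algebraic numbers: algebraic over algebraic is algebraic. Hence both closure
properties of `K` pass to its relative algebraic closure over `ℚ`. -/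

open Polynomial

namespace algebraicClosure

variable {F E : Type*} [Field F] [Field E] [Algebra F E]

theorem mem_of_pow_mem {x : E} {n : ℕ} (hn : n ≠ 0) (h : x ^ n ∈ algebraicClosure F E) :
    x ∈ algebraicClosure F E :=
  mem_algebraicClosure_iff'.mpr <| IsIntegral.of_pow (Nat.pos_of_ne_zero hn) h

theorem mem_of_isAlgebraic {x : E} (hx : IsAlgebraic (algebraicClosure F E) x) :
    x ∈ algebraicClosure F E := by
  obtain ⟨y, rfl⟩ : x ∈ (⊥ : IntermediateField (algebraicClosure F E) E) :=
    algebraicClosure_eq_bot F E ▸ mem_algebraicClosure_iff.mpr hx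
  exact y.2

theorem exists_eval_eq_zero_of_eval_map {f : (algebraicClosure F E)[X]} (hf : f ≠ 0) {x : E}
    (hx : (f.map (algebraMap _ E)).eval x = 0) : ∃ y : algebraicClosure F E, f.eval y = 0 := by
  rw [eval_map_algebraMap] at hx
  refine ⟨⟨x, mem_of_isAlgebraic ⟨f, hf, hx⟩⟩, ?_⟩
  rwa [← coe_aeval_eq_eval,
    ← aeval_algebraMap_eq_zero_iff_of_injective (algebraMap (algebraicClosure F E) E).injective]

end algebraicClosure

theorem algebraic_subfield_real_closed (K : Type*) [Field K] [LinearOrder K] [IsStrictOrderedRing K]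
    (hsq : ∀ c : K, 0 < c → ∃ s : K, s ^ 2 = c)
    (hodd : ∀ f : Polynomial K, Odd f.natDegree → ∃ x : K, f.eval x = 0) :
    ∃ A : Subfield K, (∀ x : K, x ∈ A ↔ IsAlgebraic ℚ x) ∧
      (∀ c : A, 0 < (c : K) → ∃ s : A, s ^ 2 = c) ∧
      (∀ f : Polynomial A, Odd f.natDegree → ∃ x : A, f.eval x = 0) := by
  refine ⟨(algebraicClosure ℚ K).toSubfield, fun x => mem_algebraicClosure_iff, ?_, ?_⟩
  · rintro ⟨c, hc⟩ hpos
    obtain ⟨s, rfl⟩ := hsq c hpos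
    exact ⟨⟨s, algebraicClosure.mem_of_pow_mem two_ne_zero hc⟩, rfl⟩
  · intro f hf
    obtain ⟨x, hx⟩ := hodd (f.map (algebraMap (algebraicClosure ℚ K) K)) (by rwa [natDegree_map])
    exact algebraicClosure.exists_eval_eq_zero_of_eval_map (ne_zero_of_natDegree_gt hf.pos) hx
end
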